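/- arXiv:2307.07824 — 3 statements merged into one kernel-verified Lean document; each statement's English description precedes it below -/
import Mathlib

section
/- If P is a zonotope in ℝ³ generated by pairwise linearly independent segments S₀, S₁, …, S_w centered at the origin, and T = {S_{w₁}, …, S_{w_t}} ⊆ {S₀,…,S_w} (t ≥ 2) is a maximal coplanar subset (the segments in T are coplanar, but adding any further generator destroys coplanarity), then the Minkowski sum F⁰ = S_{w₁} + ⋯ + S_{w_t} is a translate of a facet of P. -/
open Set Pointwise

/-- A face of dimension `d` of a polytope `P`: a nonempty exposed face whose affine hull
has dimension `d`. -/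
def IsFaceOfDim (P F : Set (Fin 3 → ℝ)) (d : ℕ) : Prop :=
  IsExposed ℝ P F ∧ F.Nonempty ∧ Module.finrank ℝ ↥(vectorSpan ℝ F) = d

/-- The segment centered at the origin with endpoint `v`. -/
def cseg (v : Fin 3 → ℝ) : Set (Fin 3 → ℝ) := segment ℝ (-v) v

section aux

variable {E : Type*} [AddCommGroup E] [Module ℝ E]

lemma mem_cseg_iff {v x : Fin 3 → ℝ} : x ∈ cseg v ↔ ∃ c : ℝ, |c| ≤ 1 ∧ x = c • v := by
  constructor
  · rintro ⟨a, b, ha, hb, hab, rfl⟩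
    refine ⟨b - a, by rw [abs_le]; constructor <;> linarith, ?_⟩
    rw [smul_neg, sub_smul, ← sub_eq_neg_add]
  · rintro ⟨c, hc, rfl⟩
    rw [abs_le] at hc
    refine ⟨(1 - c) / 2, (1 + c) / 2, by linarith, by linarith, by ring, ?_⟩
    rw [smul_neg, ← neg_smul, ← add_smul]
    congr 1
    ring

lemma zero_mem_cseg (v : Fin 3 → ℝ) : (0 : Fin 3 → ℝ) ∈ cseg v :=
  mem_cseg_iff.2 ⟨0, by norm_num, by simp⟩

lemma cseg_le (l : (Fin 3 → ℝ) →ₗ[ℝ] ℝ) (v : Fin 3 → ℝ) {x : Fin 3 → ℝ} (hx : x ∈ cseg v) :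
    l x ≤ |l v| := by
  obtain ⟨c, hc, rfl⟩ := mem_cseg_iff.1 hx
  rw [map_smul, smul_eq_mul]
  calc c * l v ≤ |c * l v| := le_abs_self _
    _ = |c| * |l v| := abs_mul _ _
    _ ≤ |l v| := mul_le_of_le_one_left (abs_nonneg _) hc

lemma l_max_cseg (l : (Fin 3 → ℝ) →ₗ[ℝ] ℝ) (v : Fin 3 → ℝ) :
    l ((if 0 < l v then (1:ℝ) else -1) • v) = |l v| := by
  rw [map_smul, smul_eq_mul]
  split_ifs with h
  · rw [one_mul, abs_of_pos h]
  · rw [neg_one_mul, abs_of_nonpos (not_lt.1 h)]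

lemma max_mem_cseg (l : (Fin 3 → ℝ) →ₗ[ℝ] ℝ) (v : Fin 3 → ℝ) :
    (if 0 < l v then (1:ℝ) else -1) • v ∈ cseg v := by
  refine mem_cseg_iff.2 ⟨_, ?_, rfl⟩
  split_ifs <;> norm_num

lemma argmax_cseg_zero {l : (Fin 3 → ℝ) →ₗ[ℝ] ℝ} {v : Fin 3 → ℝ} (h : l v = 0) :
    {x ∈ cseg v | ∀ y ∈ cseg v, l y ≤ l x} = cseg v := by
  have hval : ∀ x ∈ cseg v, l x = 0 := by
    rintro x hx
    obtain ⟨c, _, rfl⟩ := mem_cseg_iff.1 hx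
    rw [map_smul, smul_eq_mul, h, mul_zero]
  ext x
  refine ⟨fun hx => hx.1, fun hx => ⟨hx, fun y hy => ?_⟩⟩
  rw [hval x hx, hval y hy]

lemma argmax_cseg_ne {l : (Fin 3 → ℝ) →ₗ[ℝ] ℝ} {v : Fin 3 → ℝ} (h : l v ≠ 0) :
    {x ∈ cseg v | ∀ y ∈ cseg v, l y ≤ l x}
      = {(if 0 < l v then (1:ℝ) else -1) • v} := by
  set e : ℝ := if 0 < l v then (1:ℝ) else -1 with he
  ext x
  constructor
  · rintro ⟨hx, hmax⟩
    have h1 : l x ≤ |l v| := cseg_le l v hx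
    have h2 : |l v| ≤ l x := by
      rw [← l_max_cseg l v]
      exact hmax _ (max_mem_cseg l v)
    obtain ⟨c, _, rfl⟩ := mem_cseg_iff.1 hx
    have h3 : l (c • v) = |l v| := le_antisymm h1 h2
    have h5 := l_max_cseg l v
    rw [← he] at h5
    rw [map_smul, smul_eq_mul] at h3 h5
    have hc : c * l v = e * l v := by linarith
    have : c = e := mul_right_cancel₀ h hc
    simp [this]
  · rintro rfl
    refine ⟨max_mem_cseg l v, fun y hy => ?_⟩
    rw [show ((if 0 < l v then (1:ℝ) else -1) • v) = e • v from rfl, ← he] at *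
    calc l y ≤ |l v| := cseg_le l v hy
      _ = l (e • v) := (l_max_cseg l v).symm

lemma argmax_add (l : (Fin 3 → ℝ) →ₗ[ℝ] ℝ) {A B : Set (Fin 3 → ℝ)} {a b : Fin 3 → ℝ}
    (haA : a ∈ A) (haM : ∀ y ∈ A, l y ≤ l a)
    (hbB : b ∈ B) (hbM : ∀ y ∈ B, l y ≤ l b) :
    {x ∈ A + B | ∀ y ∈ A + B, l y ≤ l x}
      = {x ∈ A | ∀ y ∈ A, l y ≤ l x} + {x ∈ B | ∀ y ∈ B, l y ≤ l x} := by
  ext x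
  constructor
  · rintro ⟨hx, hmax⟩
    obtain ⟨u, hu, z, hz, rfl⟩ := hx
    have hsum : l a + l b ≤ l u + l z := by
      have := hmax (a + b) (Set.add_mem_add haA hbB)
      rwa [map_add, map_add] at this
    have hu' : l u = l a := le_antisymm (haM u hu) (by have := hbM z hz; linarith)
    have hz' : l z = l b := le_antisymm (hbM z hz) (by have := haM u hu; linarith)
    exact Set.add_mem_add ⟨hu, fun y hy => hu' ▸ haM y hy⟩
      ⟨hz, fun y hy => hz' ▸ hbM y hy⟩
  · rintro ⟨u, ⟨hu, hu2⟩, z, ⟨hz, hz2⟩, rfl⟩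
    refine ⟨Set.add_mem_add hu hz, ?_⟩
    rintro y ⟨y1, hy1, y2, hy2, rfl⟩
    rw [map_add, map_add]
    exact add_le_add (hu2 y1 hy1) (hz2 y2 hy2)

lemma argmax_finsetSum {ι : Type*} (l : (Fin 3 → ℝ) →ₗ[ℝ] ℝ) (s : Finset ι)
    (A : ι → Set (Fin 3 → ℝ)) (m : ι → Fin 3 → ℝ)
    (hm : ∀ i ∈ s, m i ∈ A i ∧ ∀ y ∈ A i, l y ≤ l (m i)) :
    {x ∈ ∑ i ∈ s, A i | ∀ y ∈ ∑ i ∈ s, A i, l y ≤ l x}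
      = ∑ i ∈ s, {x ∈ A i | ∀ y ∈ A i, l y ≤ l x} := by
  classical
  induction s using Finset.induction_on with
  | empty =>
    simp only [Finset.sum_empty]
    ext x
    constructor
    · rintro ⟨hx, _⟩; exact hx
    · intro hx
      rw [Set.mem_zero] at hx
      subst hx
      refine ⟨rfl, fun y hy => ?_⟩
      rw [Set.mem_zero] at hy
      subst hy
      exact le_refl _
  | @insert i s his ih =>
    rw [Finset.sum_insert his, Finset.sum_insert his]
    have hmi := hm i (Finset.mem_insert_self i s)
    have hms : (∑ j ∈ s, m j) ∈ ∑ j ∈ s, A j := by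
      rw [Set.mem_finset_sum]
      exact ⟨m, fun hj => (hm _ (Finset.mem_insert_of_mem hj)).1, rfl⟩
    have hmsM : ∀ y ∈ ∑ j ∈ s, A j, l y ≤ l (∑ j ∈ s, m j) := by
      intro y hy
      rw [Set.mem_finset_sum] at hy
      obtain ⟨g, hg, rfl⟩ := hy
      rw [map_sum, map_sum]
      exact Finset.sum_le_sum fun j hj =>
        (hm j (Finset.mem_insert_of_mem hj)).2 _ (hg hj)
    rw [argmax_add l hmi.1 hmi.2 hms hmsM,
      ih (fun j hj => hm j (Finset.mem_insert_of_mem hj))]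

lemma finsetSum_singleton {ι : Type*} (s : Finset ι) (f : ι → Fin 3 → ℝ) :
    (∑ i ∈ s, ({f i} : Set (Fin 3 → ℝ))) = {∑ i ∈ s, f i} := by
  classical
  induction s using Finset.induction_on with
  | empty =>
    simp only [Finset.sum_empty]
    exact Set.singleton_zero.symm
  | @insert i s his ih =>
    rw [Finset.sum_insert his, Finset.sum_insert his, ih, Set.singleton_add_singleton]

lemma vectorSpan_translate (s : Set (Fin 3 → ℝ)) (t : Fin 3 → ℝ) :
    vectorSpan ℝ ((fun y => y + t) '' s) = vectorSpan ℝ s := by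
  rw [vectorSpan_def, vectorSpan_def]
  congr 1
  ext x
  constructor
  · rintro ⟨_, ⟨a, ha, rfl⟩, _, ⟨b, hb, rfl⟩, rfl⟩
    show (a + t) -ᵥ (b + t) ∈ s -ᵥ s
    have h : (a + t) -ᵥ (b + t) = a -ᵥ b := by
      simp only [vsub_eq_sub]; abel
    rw [h]
    exact Set.vsub_mem_vsub ha hb
  · rintro ⟨a, ha, b, hb, rfl⟩
    show a -ᵥ b ∈ _
    have h : a -ᵥ b = (a + t) -ᵥ (b + t) := by
      simp only [vsub_eq_sub]; abel
    rw [h]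
    exact Set.vsub_mem_vsub ⟨a, ha, rfl⟩ ⟨b, hb, rfl⟩

/-- Lemma 4.1: for a 3-dimensional zonotope, the Minkowski sum of a maximal coplanar
set of generators (of size at least 2) is a translate of a facet. -/
theorem maximal_coplanar_sum_is_facet {w : ℕ} (v : Fin (w + 1) → (Fin 3 → ℝ))
    (hnz : ∀ i, v i ≠ 0)
    (hpair : ∀ i j, i ≠ j → ∀ a b : ℝ, a • v i + b • v j = 0 → a = 0 ∧ b = 0)
    (hfull : Submodule.span ℝ (Set.range v) = ⊤)
    (P : Set (Fin 3 → ℝ)) (hP : P = ∑ i, cseg (v i))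
    (T : Finset (Fin (w + 1))) (hT2 : 2 ≤ T.card)
    (hcop : ∃ W : Submodule ℝ (Fin 3 → ℝ),
      Module.finrank ℝ ↥W ≤ 2 ∧ ∀ i ∈ T, v i ∈ W)
    (hmax : ∀ j ∉ T, ¬ ∃ W : Submodule ℝ (Fin 3 → ℝ),
      Module.finrank ℝ ↥W ≤ 2 ∧ (∀ i ∈ T, v i ∈ W) ∧ v j ∈ W) :
    ∃ t : Fin 3 → ℝ, IsFaceOfDim P ((fun y => y + t) '' (∑ i ∈ T, cseg (v i))) 2 := by
  classical
  obtain ⟨W, hW2, hWmem⟩ := hcop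
  set W₀ : Submodule ℝ (Fin 3 → ℝ) := Submodule.span ℝ (v '' ↑T) with hW₀def
  have hW₀le : W₀ ≤ W := Submodule.span_le.2 (by rintro _ ⟨i, hi, rfl⟩; exact hWmem i hi)
  have hW₀mem : ∀ i ∈ T, v i ∈ W₀ := fun i hi => Submodule.subset_span ⟨i, hi, rfl⟩
  have hW₀rank : Module.finrank ℝ W₀ ≤ 2 := le_trans (Submodule.finrank_mono hW₀le) hW2
  have hdim3 : Module.finrank ℝ (Fin 3 → ℝ) = 3 := Module.finrank_fin_fun ℝ
  have hW₀lt : W₀ < ⊤ := by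
    rw [lt_top_iff_ne_top]
    intro h
    rw [h, finrank_top, hdim3] at hW₀rank
    omega
  obtain ⟨f, hf0, hfbot⟩ := Submodule.exists_dual_map_eq_bot_of_lt_top hW₀lt inferInstance
  have hfW₀ : ∀ x ∈ W₀, f x = 0 := by
    intro x hx
    have : f x ∈ W₀.map f := ⟨x, hx, rfl⟩
    rw [hfbot, Submodule.mem_bot] at this
    exact this
  have hfT : ∀ i ∈ T, f (v i) = 0 := fun i hi => hfW₀ _ (hW₀mem i hi)
  have hfTc : ∀ j ∉ T, f (v j) ≠ 0 := by
    intro j hj hfj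
    apply hmax j hj
    refine ⟨LinearMap.ker f, ?_, fun i hi => LinearMap.mem_ker.2 (hfT i hi),
      LinearMap.mem_ker.2 hfj⟩
    have hker : LinearMap.ker f ≠ ⊤ := fun h => hf0 (LinearMap.ker_eq_top.1 h)
    have := Submodule.finrank_lt (K := ℝ) (V := Fin 3 → ℝ) hker
    rw [hdim3] at this
    omega
  set m : Fin (w + 1) → Fin 3 → ℝ := fun i => (if 0 < f (v i) then (1:ℝ) else -1) • v i
    with hmdef
  set t : Fin 3 → ℝ := ∑ j ∈ Tᶜ, m j with htdef
  set F₀ : Set (Fin 3 → ℝ) := ∑ i ∈ T, cseg (v i) with hF₀def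
  have hkey : (fun y => y + t) '' F₀ = {x ∈ P | ∀ y ∈ P, f y ≤ f x} := by
    rw [hP]
    rw [argmax_finsetSum f Finset.univ (fun i => cseg (v i)) m
      (fun i _ => ⟨max_mem_cseg f (v i),
        fun y hy => (cseg_le f (v i) hy).trans_eq (l_max_cseg f (v i)).symm⟩)]
    rw [← Finset.sum_add_sum_compl T]
    rw [Finset.sum_congr rfl (fun i hi => argmax_cseg_zero (hfT i hi))]
    rw [Finset.sum_congr rfl
      (fun j hj => argmax_cseg_ne (hfTc j (Finset.mem_compl.1 hj)))]
    rw [_root_.finsetSum_singleton]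
    exact (Set.add_singleton).symm
  refine ⟨t, ?_, ?_, ?_⟩
  · -- exposed
    intro _
    refine ⟨LinearMap.toContinuousLinearMap f, ?_⟩
    have hcoe : ⇑(LinearMap.toContinuousLinearMap f) = ⇑f :=
      LinearMap.coe_toContinuousLinearMap' f
    rw [show {x ∈ P | ∀ y ∈ P, (LinearMap.toContinuousLinearMap f) y
        ≤ (LinearMap.toContinuousLinearMap f) x} = {x ∈ P | ∀ y ∈ P, f y ≤ f x} by
      simp only [hcoe]]
    exact hkey
  · -- nonempty
    have h0 : (0 : Fin 3 → ℝ) ∈ F₀ := by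
      rw [hF₀def, Set.mem_finset_sum]
      exact ⟨fun _ => 0, fun _ => zero_mem_cseg _, by simp⟩
    exact ⟨0 + t, Set.mem_image_of_mem _ h0⟩
  · -- dimension
    rw [show ((fun y => y + t) '' (∑ i ∈ T, cseg (v i))) = (fun y => y + t) '' F₀ from rfl]
    rw [vectorSpan_translate]
    have hF₀sub : F₀ ⊆ (W₀ : Set (Fin 3 → ℝ)) := by
      intro x hx
      rw [hF₀def, Set.mem_finset_sum] at hx
      obtain ⟨g, hg, rfl⟩ := hx
      refine Submodule.sum_mem _ fun i hi => ?_
      obtain ⟨c, _, hc⟩ := mem_cseg_iff.1 (hg hi)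
      rw [hc]
      exact Submodule.smul_mem _ _ (hW₀mem i hi)
    have hvspan : vectorSpan ℝ F₀ = W₀ := by
      apply le_antisymm
      · rw [vectorSpan_def]
        refine Submodule.span_le.2 ?_
        rintro _ ⟨a, ha, b, hb, rfl⟩
        show a -ᵥ b ∈ W₀
        rw [vsub_eq_sub]
        exact Submodule.sub_mem _ (hF₀sub ha) (hF₀sub hb)
      · refine Submodule.span_le.2 ?_
        rintro _ ⟨i, hi, rfl⟩
        have h0 : (0 : Fin 3 → ℝ) ∈ F₀ := by
          rw [hF₀def, Set.mem_finset_sum]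
          exact ⟨fun _ => 0, fun _ => zero_mem_cseg _, by simp⟩
        have hvi : v i ∈ F₀ := by
          rw [hF₀def, Set.mem_finset_sum]
          refine ⟨fun j => if j = i then v j else 0, ?_, ?_⟩
          · intro j hj
            dsimp only
            split_ifs
            · exact mem_cseg_iff.2 ⟨1, by norm_num, (one_smul _ _).symm⟩
            · exact zero_mem_cseg _
          · rw [Finset.sum_ite_eq' T i (fun j => v j)]
            simp [Finset.mem_coe.1 hi]
        have := vsub_mem_vectorSpan ℝ hvi h0
        simpa using this
    rw [hvspan]
    -- finrank W₀ = 2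
    refine le_antisymm hW₀rank ?_
    obtain ⟨i0, hi0, i1, hi1, hne⟩ := Finset.one_lt_card.1 hT2
    have hli : LinearIndependent ℝ ![v i0, v i1] :=
      LinearIndependent.pair_iff.2 fun a b hab => hpair i0 i1 hne a b hab
    have hsp : Submodule.span ℝ (Set.range ![v i0, v i1]) ≤ W₀ := by
      refine Submodule.span_le.2 ?_
      rintro _ ⟨k, rfl⟩
      fin_cases k
      · exact hW₀mem i0 hi0
      · exact hW₀mem i1 hi1
    have h2 : Module.finrank ℝ (Submodule.span ℝ (Set.range ![v i0, v i1])) = 2 := by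
      rw [finrank_span_eq_card hli]
      simp
    rw [← h2]
    exact Submodule.finrank_mono hsp
end aux
end

section
/- Let P be a three-dimensional zonotope with generator set 𝕊_P = {S₀, S₁, …, S_w} of pairwise linearly independent segments centered at the origin, let E be an edge of P that is a translate of S₀, and let F₁⁰, …, F_m⁰ be the original facets of P corresponding to the m pairs of facets in the belt B(E) determined by E, with generator sets 𝕊_{F_i⁰} ⊆ 𝕊_P. Then 𝕊_P = ⋃_{i=1}^m 𝕊_{F_i⁰}, and 𝕊_{F_j⁰} ∩ 𝕊_{F_k⁰} = {S₀} for all j ≠ k. -/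
open Set Pointwise

/-- A finite set of generator indices is coplanar if the corresponding vectors lie in a
common linear subspace of dimension at most 2. -/
def CoplanarIdx {w : ℕ} (v : Fin (w + 1) → (Fin 3 → ℝ)) (T : Finset (Fin (w + 1))) : Prop :=
  ∃ W : Submodule ℝ (Fin 3 → ℝ), Module.finrank ℝ ↥W ≤ 2 ∧ ∀ i ∈ T, v i ∈ W

/-- A maximal coplanar set of generator indices. -/
def MaximalCoplanarIdx {w : ℕ} (v : Fin (w + 1) → (Fin 3 → ℝ))
    (T : Finset (Fin (w + 1))) : Prop :=
  CoplanarIdx v T ∧ ∀ j ∉ T, ¬ CoplanarIdx v (insert j T)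

/-- Lemma 4.2: the generator sets of the original facets of the belt determined by the
generator `S₀` (i.e. the maximal coplanar sets of generators containing index `0`) cover
all generators, and any two distinct ones meet exactly in `{0}`. -/
theorem belt_generator_sets_cover_and_meet_in_S0 {w : ℕ}
    (v : Fin (w + 1) → (Fin 3 → ℝ))
    (hnz : ∀ i, v i ≠ 0)
    (hpair : ∀ i j, i ≠ j → ∀ a b : ℝ, a • v i + b • v j = 0 → a = 0 ∧ b = 0)
    (hfull : Submodule.span ℝ (Set.range v) = ⊤) :
    (∀ j : Fin (w + 1), ∃ T : Finset (Fin (w + 1)),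
      (0 : Fin (w + 1)) ∈ T ∧ MaximalCoplanarIdx v T ∧ j ∈ T) ∧
    (∀ T₁ T₂ : Finset (Fin (w + 1)), (0 : Fin (w + 1)) ∈ T₁ → (0 : Fin (w + 1)) ∈ T₂ →
      MaximalCoplanarIdx v T₁ → MaximalCoplanarIdx v T₂ → T₁ ≠ T₂ →
      T₁ ∩ T₂ = {(0 : Fin (w + 1))}) := by
  classical
  have hindep : ∀ i j : Fin (w + 1), i ≠ j → LinearIndependent ℝ ![v i, v j] := fun i j hij =>
    LinearIndependent.pair_iff.mpr (fun s t h => hpair i j hij s t h)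
  have hrank : ∀ i j : Fin (w + 1), i ≠ j →
      Module.finrank ℝ ↥(Submodule.span ℝ (Set.range ![v i, v j])) = 2 := by
    intro i j hij
    rw [finrank_span_eq_card (hindep i j hij)]
    simp
  -- The maximal coplanar set generated by a pair of distinct indices.
  have hmax : ∀ i j : Fin (w + 1), i ≠ j →
      ∃ T : Finset (Fin (w + 1)), i ∈ T ∧ j ∈ T ∧ MaximalCoplanarIdx v T := by
    intro i j hij
    set W := Submodule.span ℝ (Set.range ![v i, v j]) with hW
    have hvi : v i ∈ W := Submodule.subset_span ⟨0, rfl⟩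
    have hvj : v j ∈ W := Submodule.subset_span ⟨1, rfl⟩
    refine ⟨Finset.univ.filter (fun k => v k ∈ W),
      Finset.mem_filter.mpr ⟨Finset.mem_univ _, hvi⟩,
      Finset.mem_filter.mpr ⟨Finset.mem_univ _, hvj⟩, ?_, ?_⟩
    · exact ⟨W, by rw [hrank i j hij], fun k hk => (Finset.mem_filter.mp hk).2⟩
    · intro k hk hcop
      obtain ⟨W', hW2, hmem⟩ := hcop
      have hk' : v k ∉ W := by
        intro hmem'
        exact hk (Finset.mem_filter.mpr ⟨Finset.mem_univ _, hmem'⟩)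
      have hle : W ≤ W' := by
        rw [hW, Submodule.span_le]
        rintro x ⟨n, rfl⟩
        fin_cases n
        · exact hmem i (Finset.mem_insert_of_mem (Finset.mem_filter.mpr ⟨Finset.mem_univ _, hvi⟩))
        · exact hmem j (Finset.mem_insert_of_mem (Finset.mem_filter.mpr ⟨Finset.mem_univ _, hvj⟩))
      have heq : W = W' :=
        Submodule.eq_of_le_of_finrank_le hle (by rw [hrank i j hij]; exact hW2)
      exact hk' (heq ▸ hmem k (Finset.mem_insert_self _ _))
  -- Characterization of a maximal coplanar set containing 0 and some i ≠ 0.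
  have hWeq : ∀ (T : Finset (Fin (w + 1))) (i : Fin (w + 1)), i ≠ 0 → 0 ∈ T → i ∈ T →
      MaximalCoplanarIdx v T →
      ∀ k, k ∈ T ↔ v k ∈ Submodule.span ℝ (Set.range ![v 0, v i]) := by
    intro T i hi h0 hiT hM k
    obtain ⟨⟨W, hr, hmem⟩, hmax'⟩ := hM
    have hle : Submodule.span ℝ (Set.range ![v 0, v i]) ≤ W := by
      rw [Submodule.span_le]
      rintro x ⟨n, rfl⟩
      fin_cases n
      · exact hmem 0 h0
      · exact hmem i hiT
    have heq : Submodule.span ℝ (Set.range ![v 0, v i]) = W :=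
      Submodule.eq_of_le_of_finrank_le hle (by rw [hrank 0 i (Ne.symm hi)]; exact hr)
    constructor
    · intro hk
      exact heq ▸ hmem k hk
    · intro hk
      by_contra hkT
      refine hmax' k hkT ⟨W, hr, ?_⟩
      intro m hm
      rcases Finset.mem_insert.mp hm with rfl | hm
      · exact heq ▸ hk
      · exact hmem m hm
  -- w ≥ 1
  have hw : w ≠ 0 := by
    intro h
    subst h
    have hle : Submodule.span ℝ (Set.range v) ≤ Submodule.span ℝ {v 0} := by
      rw [Submodule.span_le]
      rintro x ⟨n, rfl⟩
      have : n = 0 := Fin.ext (by omega)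
      subst this
      exact Submodule.mem_span_singleton_self _
    rw [hfull] at hle
    have h1 : Module.finrank ℝ ↥(Submodule.span ℝ {v 0}) = 1 := finrank_span_singleton (hnz 0)
    have h3 : Module.finrank ℝ ↥(⊤ : Submodule ℝ (Fin 3 → ℝ)) = 3 := by simp
    have := Submodule.finrank_mono hle
    omega
  constructor
  · intro j
    by_cases hj : j = 0
    · subst hj
      have hk : (0 : Fin (w + 1)) ≠ ⟨1, by omega⟩ := by
        intro h
        exact absurd (congrArg Fin.val h) (by simp)
      obtain ⟨T, h0, _, hM⟩ := hmax 0 ⟨1, by omega⟩ hk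
      exact ⟨T, h0, hM, h0⟩
    · obtain ⟨T, h0, hjT, hM⟩ := hmax 0 j (Ne.symm hj)
      exact ⟨T, h0, hM, hjT⟩
  · intro T₁ T₂ h01 h02 hM1 hM2 hne
    ext k
    simp only [Finset.mem_inter, Finset.mem_singleton]
    constructor
    · rintro ⟨hk1, hk2⟩
      by_contra hk0
      apply hne
      ext m
      rw [hWeq T₁ k hk0 h01 hk1 hM1 m, hWeq T₂ k hk0 h02 hk2 hM2 m]
    · rintro rfl
      exact ⟨h01, h02⟩
end

section
/- Let P be a three-dimensional zonotope with generator set 𝕊_P = {S₀, S₁, …, S_w} of pairwise linearly independent segments centered at the origin, and let the vector of S₀ be s⃗₀ (so S₀ is the segment from −s⃗₀/2 to s⃗₀/2). Then P ∩ (P + s⃗₀) = P* + s⃗₀/2, where P* is the zonotope generated by 𝕊_P \ {S₀}. -/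
open Set Pointwise

/-- The generator segment with full edge vector `s`, i.e. the segment from `-s/2` to `s/2`. -/
def genSeg (s : Fin 3 → ℝ) : Set (Fin 3 → ℝ) :=
  segment ℝ (-((2 : ℝ)⁻¹ • s)) ((2 : ℝ)⁻¹ • s)

lemma zonotope_key (Q : Set (Fin 3 → ℝ)) (hQ : Convex ℝ Q) (v : Fin 3 → ℝ) :
    (genSeg v + Q) ∩ ((fun y => y + v) '' (genSeg v + Q)) =
      (fun y => y + (2 : ℝ)⁻¹ • v) '' Q := by
  ext x
  simp only [Set.mem_inter_iff, Set.mem_image, Set.mem_add, genSeg]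
  constructor
  · rintro ⟨⟨σ₁, hσ₁, q₁, hq₁, rfl⟩, x', ⟨σ₂, hσ₂, q₂, hq₂, rfl⟩, hx'⟩
    obtain ⟨a, a', ha0, ha0', haa, rfl⟩ := hσ₁
    obtain ⟨b, b', hb0, hb0', hbb, rfl⟩ := hσ₂
    have ha' : a' = 1 - a := by linarith
    have hb : b = 1 - b' := by linarith
    subst ha' hb
    have hE : q₁ = q₂ + (a + b') • v := by
      linear_combination (norm := module) - hx'
    refine ⟨q₁ - a • v, ?_, by module⟩
    rcases eq_or_lt_of_le (by positivity : (0 : ℝ) ≤ a + b') with hT | hT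
    · have haz : a = 0 := by linarith
      rw [haz, zero_smul, sub_zero]
      exact hq₁
    · have hmem := hQ hq₁ hq₂ (div_nonneg hb0' hT.le) (div_nonneg ha0 hT.le)
        (by rw [← add_div, div_eq_one_iff_eq hT.ne']; ring)
      have h2 : (a + b') • (q₁ - a • v) = b' • q₁ + a • q₂ := by
        linear_combination (norm := module) a • hE
      have h3 : q₁ - a • v = (b' / (a + b')) • q₁ + (a / (a + b')) • q₂ := by
        calc q₁ - a • v = (a + b')⁻¹ • ((a + b') • (q₁ - a • v)) := by
              rw [smul_smul, inv_mul_cancel₀ hT.ne', one_smul]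
          _ = (a + b')⁻¹ • (b' • q₁ + a • q₂) := by rw [h2]
          _ = (b' / (a + b')) • q₁ + (a / (a + b')) • q₂ := by
              rw [smul_add, smul_smul, smul_smul, div_eq_inv_mul, div_eq_inv_mul]
      rw [h3]
      exact hmem
  · rintro ⟨q, hq, rfl⟩
    refine ⟨⟨(2 : ℝ)⁻¹ • v, right_mem_segment ℝ _ _, q, hq, by module⟩,
      -((2 : ℝ)⁻¹ • v) + q, ⟨-((2 : ℝ)⁻¹ • v), left_mem_segment ℝ _ _, q, hq, rfl⟩,
      by module⟩

/-- Corollary 4.2: for a 3-dimensional zonotope `P` with generators `S₀, …, S_w`,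
`P ∩ (P + s⃗₀) = P* + s⃗₀/2`, where `P*` is the zonotope generated by all generators
except `S₀`. -/
theorem zonotope_inter_translate_by_generator {w : ℕ}
    (s : Fin (w + 1) → (Fin 3 → ℝ))
    (hnz : ∀ i, s i ≠ 0)
    (hpair : ∀ i j, i ≠ j → ∀ a b : ℝ, a • s i + b • s j = 0 → a = 0 ∧ b = 0) :
    (∑ i, genSeg (s i)) ∩ ((fun y => y + s 0) '' ∑ i, genSeg (s i)) =
      (fun y => y + (2 : ℝ)⁻¹ • s 0) ''
        (∑ i ∈ Finset.univ.erase (0 : Fin (w + 1)), genSeg (s i)) := by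
  have hQ : Convex ℝ (∑ i ∈ Finset.univ.erase (0 : Fin (w + 1)), genSeg (s i)) := by
    refine Finset.sum_induction _ _ (fun A B hA hB => hA.add hB) ?_ (fun i _ => ?_)
    · exact convex_singleton 0
    · exact convex_segment _ _
  rw [← Finset.add_sum_erase Finset.univ (fun i => genSeg (s i)) (Finset.mem_univ 0)]
  exact zonotope_key _ hQ (s 0)
end
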